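/- arXiv:2304.13801 — 5 statements merged into one kernel-verified Lean document; each statement's English description precedes it below -/
import Mathlib

section
/- Let q be a power of a prime p, and let d be a divisor of q-1 with d > 1. Suppose A, B ⊆ F_q are such that A + B ⊆ S_d ∪ {0} and the binomial coefficient C(|A| - 1 + (q-1)/d, (q-1)/d) is not divisible by p. Then |A| · |B| ≤ (q-1)/d + |A ∩ (-B)|, where -B = {-b : b ∈ B}. -/
/-!
Stepanov's method. Put `s = (q-1)/d`, `m = |A|` and let `w a` be the Lagrange weights of the
nodes `A`; reading off the `X^(m-1)`-coefficient of the interpolation of `(X + x)^t` gives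
`∑ a ∈ A, w a * (a + x)^t = [t = m-1]` for every `x` and `t < m`. Hence the polynomial
`g = ∑ a ∈ A, w a * (X + a)^(m-1+s) - 1` has degree at most `s`, with `X^s`-coefficient
`C(m-1+s, s) ≠ 0`. For `b ∈ B` every `a + b` is `0` or an `s`-th root of unity, so
`(a + b)^(m-1+s-k) = (a + b)^(m-1-k)` and the Taylor coefficients of `g` at `b` of order
`k < m` vanish, except possibly for `k = m-1` when `-b ∈ A`. Counting roots of `g` with
multiplicity over `B` gives `m |B| - |A ∩ (-B)| ≤ s`.
-/

open Pointwise Polynomial Finset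

theorem Polynomial.sum_rootMultiplicity_le_natDegree {R : Type*} [CommRing R] [IsDomain R]
    [DecidableEq R] (p : R[X]) (B : Finset R) : ∑ b ∈ B, p.rootMultiplicity b ≤ p.natDegree :=
  calc ∑ b ∈ B, p.rootMultiplicity b = ∑ b ∈ B, p.roots.count b := by simp only [count_roots]
    _ ≤ ∑ b ∈ p.roots.toFinset, p.roots.count b :=
      sum_le_sum_of_ne_zero fun b _ hb => Multiset.mem_toFinset.mpr (Multiset.count_ne_zero.mp hb)
    _ = Multiset.card p.roots := Multiset.toFinset_sum_count_eq _
    _ ≤ p.natDegree := card_roots' p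

theorem Finset.card_filter_neg_mem {α : Type*} [DecidableEq α] [InvolutiveNeg α]
    (A B : Finset α) : #{b ∈ B | -b ∈ A} = #(A ∩ -B) := by
  rw [← card_neg]
  congr 1
  ext b
  simp [and_comm]

section Stepanov

variable {F : Type*} [Field F] [DecidableEq F]

theorem sum_nodalWeight_mul_add_pow (A : Finset F) (x : F) {t : ℕ} (ht : t < #A) :
    ∑ a ∈ A, Lagrange.nodalWeight A id a * (a + x) ^ t = if t = #A - 1 then 1 else 0 := by
  have h := Lagrange.coeff_eq_sum (s := A) (v := (· + x)) ((add_left_injective x).injOn)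
    (P := X ^ t) (by rw [degree_X_pow]; exact_mod_cast ht)
  convert h.symm using 1
  · refine sum_congr rfl fun a _ => ?_
    simp [Lagrange.nodalWeight, prod_inv_distrib, div_eq_inv_mul]
  · simp [coeff_X_pow, eq_comm]

noncomputable def stepanovPoly (A : Finset F) (s : ℕ) : F[X] :=
  ∑ a ∈ A, C (Lagrange.nodalWeight A id a) * (X + C a) ^ (#A - 1 + s) - 1

theorem coeff_stepanovPoly_comp (A : Finset F) (s : ℕ) (x : F) (k : ℕ) :
    ((stepanovPoly A s).comp (X + C x)).coeff k =
      (#A - 1 + s).choose k * ∑ a ∈ A, Lagrange.nodalWeight A id a * (a + x) ^ (#A - 1 + s - k)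
        - if k = 0 then 1 else 0 := by
  have : (stepanovPoly A s).comp (X + C x) =
      ∑ a ∈ A, C (Lagrange.nodalWeight A id a) * (X + C (a + x)) ^ (#A - 1 + s) - 1 := by
    simp [stepanovPoly, Polynomial.sum_comp, add_assoc, add_comm (C x)]
  simp only [this, coeff_sub, finsetSum_coeff, coeff_C_mul, coeff_X_add_C_pow, coeff_one, mul_sum]
  congr 1
  exact sum_congr rfl fun a _ => by ring

theorem coeff_stepanovPoly (A : Finset F) (s k : ℕ) :
    (stepanovPoly A s).coeff k =
      (#A - 1 + s).choose k * ∑ a ∈ A, Lagrange.nodalWeight A id a * a ^ (#A - 1 + s - k)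
        - if k = 0 then 1 else 0 := by
  simpa using coeff_stepanovPoly_comp A s 0 k

theorem natDegree_stepanovPoly_le (A : Finset F) (s : ℕ) : (stepanovPoly A s).natDegree ≤ s := by
  refine natDegree_le_iff_coeff_eq_zero.mpr fun k hk => ?_
  rw [coeff_stepanovPoly, if_neg (by omega), sub_zero]
  rcases le_or_gt k (#A - 1 + s) with hkN | hkN
  · have := sum_nodalWeight_mul_add_pow A 0 (t := #A - 1 + s - k) (by omega)
    simp only [add_zero] at this
    rw [this, if_neg (by omega), mul_zero]
  · rw [Nat.choose_eq_zero_of_lt hkN, Nat.cast_zero, zero_mul]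

theorem coeff_stepanovPoly_self {A : Finset F} (hA : A.Nonempty) {s : ℕ} (hs : s ≠ 0) :
    (stepanovPoly A s).coeff s = (#A - 1 + s).choose s := by
  have := sum_nodalWeight_mul_add_pow A 0 (t := #A - 1) (by have := hA.card_pos; omega)
  simp only [add_zero, if_pos] at this
  rw [coeff_stepanovPoly, Nat.add_sub_cancel, this, if_neg hs, mul_one, sub_zero]

theorem card_le_rootMultiplicity_stepanovPoly {A : Finset F} {s : ℕ} (hg : stepanovPoly A s ≠ 0)
    {x : F} (hx : ∀ a ∈ A, a + x ≠ 0 → (a + x) ^ s = 1) :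
    #A ≤ (stepanovPoly A s).rootMultiplicity x + if -x ∈ A then 1 else 0 := by
  suffices h : ∀ k < #A - (if -x ∈ A then 1 else 0),
      ((stepanovPoly A s).comp (X + C x)).coeff k = 0 by
    have := le_natTrailingDegree (comp_X_add_C_ne_zero_iff.mpr hg) h
    rw [rootMultiplicity_eq_natTrailingDegree]
    omega
  intro k hk
  have hpow : ∀ a ∈ A, (a + x) ^ (#A - 1 + s - k) = (a + x) ^ (#A - 1 - k) := by
    intro a ha
    by_cases h0 : a + x = 0
    · have : -x ∈ A := by rwa [← eq_neg_of_add_eq_zero_left h0]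
      rw [if_pos this] at hk
      rw [h0, zero_pow (by omega), zero_pow (by omega)]
    · rw [show #A - 1 + s - k = s + (#A - 1 - k) by omega, pow_add, hx a ha h0, one_mul]
  rw [coeff_stepanovPoly_comp, sum_congr rfl fun a ha => by rw [hpow a ha],
    sum_nodalWeight_mul_add_pow A x (by omega)]
  rcases Nat.eq_zero_or_pos k with rfl | hk0
  · simp
  · rw [if_neg (by omega), if_neg hk0.ne']
    simp

theorem card_mul_card_le_of_add_pow_eq_one {A B : Finset F} {s : ℕ} (hs : s ≠ 0)
    (hchoose : ((#A - 1 + s).choose s : F) ≠ 0)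
    (hAB : ∀ a ∈ A, ∀ b ∈ B, a + b ≠ 0 → (a + b) ^ s = 1) :
    #A * #B ≤ s + #(A ∩ -B) := by
  rcases A.eq_empty_or_nonempty with rfl | hA
  · simp
  have hg : stepanovPoly A s ≠ 0 := fun h =>
    hchoose (by rw [← coeff_stepanovPoly_self hA hs, h, coeff_zero])
  calc #A * #B = ∑ b ∈ B, #A := by rw [sum_const, smul_eq_mul, mul_comm]
    _ ≤ ∑ b ∈ B, ((stepanovPoly A s).rootMultiplicity b + if -b ∈ A then 1 else 0) :=
      sum_le_sum fun b hb =>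
        card_le_rootMultiplicity_stepanovPoly hg fun a ha => hAB a ha b hb
    _ = ∑ b ∈ B, (stepanovPoly A s).rootMultiplicity b + #{b ∈ B | -b ∈ A} := by
      rw [sum_add_distrib, card_filter]
    _ ≤ s + #(A ∩ -B) := by
      rw [card_filter_neg_mem]
      gcongr
      exact (sum_rootMultiplicity_le_natDegree _ B).trans (natDegree_stepanovPoly_le A s)

end Stepanov

theorem stmt_0_general (p n q : ℕ) (hp : p.Prime) (hq : q = p ^ n)
    (F : Type) [Field F] [Fintype F] [DecidableEq F] (hF : Fintype.card F = q)
    (d : ℕ) (hd : d ∣ q - 1)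
    (A B : Finset F)
    (hAB : A + B ⊆ (Finset.image (fun x : Fˣ => ((x : F) ^ d)) Finset.univ) ∪ {0})
    (hbin : ¬ (p ∣ Nat.choose (A.card - 1 + (q - 1) / d) ((q - 1) / d))) :
    A.card * B.card ≤ (q - 1) / d + (A ∩ (-B)).card := by
  have := Fact.mk hp
  have : CharP F p := charP_of_card_eq_prime_pow (hF.trans hq)
  have hds : d * ((q - 1) / d) = q - 1 := Nat.mul_div_cancel' hd
  have hq1 : 1 < q := hF ▸ Fintype.one_lt_card
  refine card_mul_card_le_of_add_pow_eq_one (fun h => by simp [h] at hds; omega)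
    (by rwa [Ne, CharP.cast_eq_zero_iff F p]) fun a ha b hb hab => ?_
  rcases mem_union.mp (hAB (add_mem_add ha hb)) with h | h
  · obtain ⟨u, -, hu⟩ := mem_image.mp h
    rw [← hu, ← pow_mul, hds, ← hF]
    exact FiniteField.pow_card_sub_one_eq_one _ u.ne_zero
  · exact absurd (mem_singleton.mp h) hab

/-- Let `q = p^n` be a prime power and `d ∣ q-1` with `d > 1`.
If `A + B ⊆ S_d ∪ {0}` and `p` does not divide the binomial coefficient
`C(|A| - 1 + (q-1)/d, (q-1)/d)`, then `|A|·|B| ≤ (q-1)/d + |A ∩ (-B)|`. -/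
theorem stmt_0 (p n q : ℕ) (hp : p.Prime) (hn : 0 < n) (hq : q = p ^ n)
    (F : Type) [Field F] [Fintype F] [DecidableEq F] (hF : Fintype.card F = q)
    (d : ℕ) (hd : d ∣ q - 1) (hd1 : 1 < d)
    (A B : Finset F)
    (hAB : A + B ⊆ (Finset.image (fun x : Fˣ => ((x : F) ^ d)) Finset.univ) ∪ {0})
    (hbin : ¬ (p ∣ Nat.choose (A.card - 1 + (q - 1) / d) ((q - 1) / d))) :
    A.card * B.card ≤ (q - 1) / d + (A ∩ (-B)).card :=
  stmt_0_general p n q hp hq F hF d hd A B hAB hbin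
end

section
/- Let q be a prime power and let d be a divisor of q-1 with d > 1. If A, B ⊆ F_q satisfy A + B ⊆ S_d, then |A| · |B| < q. -/
/-!
Let `χ` be a multiplicative character of order `d`, which exists because `d ∣ q - 1`. It is
trivial on `S_d`, so `∑_{a ∈ A, b ∈ B} χ(a + b) = |A| |B|`. On the other hand, since
`∑_b χ(u + b) χ⁻¹(b) = J(χ⁻¹, χ) χ(-1) = -1` for `u ≠ 0`, the correlations satisfy
`∑_b χ(a + b) χ̄(a' + b) = q [a = a'] - 1`, whence `∑_b |∑_{a ∈ A} χ(a + b)|² = |A| (q - |A|)`.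
Cauchy–Schwarz over `b ∈ B` gives `(|A| |B|)² ≤ |B| |A| (q - |A|)`, i.e. `|A| |B| ≤ q - |A|`.
-/

open Finset Complex Pointwise

namespace MulChar

lemma apply_pow_orderOf {M R : Type*} [CommMonoid M] [CommMonoidWithZero R]
    (χ : MulChar M R) (x : Mˣ) : χ ((x : M) ^ orderOf χ) = 1 := by
  rw [map_pow, ← pow_apply_coe, pow_orderOf_eq_one, one_apply_coe]

variable {F R : Type*} [Field F] [Fintype F] [Field R]

lemma sum_apply_add_mul_inv_apply {χ : MulChar F R} (hχ : χ ≠ 1) {u : F} (hu : u ≠ 0) :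
    ∑ c, χ (u + c) * χ⁻¹ c = -1 := by
  have hunit : χ u * χ⁻¹ u = 1 := by
    rw [inv_apply', ← map_mul, mul_inv_cancel₀ hu, map_one]
  have hsign : χ⁻¹ (-1) * χ⁻¹ (-1) = 1 := by rw [← map_mul, neg_one_mul, neg_neg, map_one]
  have hJ : jacobiSum χ⁻¹ χ = -χ⁻¹ (-1) := by
    simpa using jacobiSum_nontrivial_inv (inv_ne_one.mpr hχ)
  calc ∑ c, χ (u + c) * χ⁻¹ c
      = ∑ x, χ (u + -u * x) * χ⁻¹ (-u * x) :=
        (Fintype.sum_equiv (Equiv.mulLeft₀ (-u) (neg_ne_zero.mpr hu)) _ _ fun _ => rfl).symm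
    _ = ∑ x, (χ u * χ⁻¹ (-u)) * (χ⁻¹ x * χ (1 - x)) := by
        refine sum_congr rfl fun x _ => ?_
        rw [show u + -u * x = u * (1 - x) by ring, map_mul, map_mul]
        ring
    _ = χ u * χ⁻¹ (-u) * jacobiSum χ⁻¹ χ := by rw [jacobiSum, mul_sum]
    _ = -1 := by
        rw [hJ, ← neg_one_mul u, map_mul]
        linear_combination (-χ u * χ⁻¹ u) * hsign - hunit

variable [DecidableEq F]

lemma sum_apply_add_mul_inv_apply_add {χ : MulChar F R} (hχ : χ ≠ 1) (a a' : F) :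
    ∑ b, χ (a + b) * χ⁻¹ (a' + b) = (if a = a' then (Fintype.card F : R) else 0) - 1 := by
  split_ifs with h
  · subst h
    simp_rw [← mul_apply, mul_inv_cancel]
    rw [Fintype.sum_equiv (Equiv.addLeft a) (fun b => (1 : MulChar F R) (a + b)) _
      fun _ => rfl, sum_one_eq_card_units, Fintype.card_eq_card_units_add_one (α := F)]
    push_cast
    ring
  · rw [zero_sub, ← sum_apply_add_mul_inv_apply hχ (sub_ne_zero.mpr h)]
    refine Fintype.sum_equiv (Equiv.addLeft a') _ _ fun b => ?_
    simp only [add_comm a', Equiv.coe_addLeft, sub_add_add_cancel]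

lemma sum_norm_sq_sum_apply_add {χ : MulChar F ℂ} (hχ : χ ≠ 1) (A : Finset F) :
    ∑ b, ‖∑ a ∈ A, χ (a + b)‖ ^ 2 = #A * (Fintype.card F - #A) := by
  apply ofReal_injective
  push_cast
  simp_rw [← mul_conj', map_sum, ← star_def, star_apply', sum_mul_sum]
  rw [sum_comm]
  simp_rw [sum_comm (s := univ), sum_apply_add_mul_inv_apply_add hχ, sum_sub_distrib, sum_ite_eq]
  simp only [sum_ite_mem, inter_self, sum_const, nsmul_eq_mul, mul_one]
  ring

lemma norm_sum_sum_apply_add_sq_le {χ : MulChar F ℂ} (hχ : χ ≠ 1) (A B : Finset F) :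
    ‖∑ b ∈ B, ∑ a ∈ A, χ (a + b)‖ ^ 2 ≤ #B * (#A * (Fintype.card F - #A)) := by
  set f : F → ℂ := fun b => ∑ a ∈ A, χ (a + b)
  calc ‖∑ b ∈ B, f b‖ ^ 2
      ≤ (∑ b ∈ B, ‖f b‖) ^ 2 := by gcongr; exact norm_sum_le _ _
    _ ≤ #B * ∑ b ∈ B, ‖f b‖ ^ 2 := sq_sum_le_card_mul_sum_sq
    _ ≤ #B * ∑ b, ‖f b‖ ^ 2 := by gcongr; exact subset_univ B
    _ = #B * (#A * (Fintype.card F - #A)) := by rw [sum_norm_sq_sum_apply_add hχ]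

end MulChar

theorem stmt_8_general (q : ℕ)
    (F : Type) [Field F] [Fintype F] [DecidableEq F] (hF : Fintype.card F = q)
    (d : ℕ) (hd : d ∣ q - 1) (hd1 : 1 < d)
    (A B : Finset F)
    (hAB : A + B ⊆ Finset.image (fun x : Fˣ => ((x : F) ^ d)) Finset.univ) :
    A.card * B.card < q := by
  subst hF
  obtain ⟨χ, hχd⟩ := MulChar.exists_mulChar_orderOf F hd (isPrimitiveRoot_exp d (by omega))
  have hχ : χ ≠ 1 := by rintro rfl; rw [orderOf_one] at hχd; omega
  have hsum : ∑ b ∈ B, ∑ a ∈ A, χ (a + b) = #B * #A := by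
    have hone : ∀ b ∈ B, ∀ a ∈ A, χ (a + b) = 1 := fun b hb a ha => by
      obtain ⟨x, -, hx⟩ := mem_image.mp (hAB (add_mem_add ha hb))
      rw [← hx, ← hχd, χ.apply_pow_orderOf]
    rw [sum_congr rfl fun b hb => sum_congr rfl (hone b hb)]
    simp only [sum_const, nsmul_eq_mul, mul_one]
  have hbound := χ.norm_sum_sum_apply_add_sq_le hχ A B
  rw [hsum, norm_mul, Complex.norm_natCast, Complex.norm_natCast] at hbound
  rcases A.eq_empty_or_nonempty with rfl | hA
  · simpa using Fintype.card_pos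
  rcases B.eq_empty_or_nonempty with rfl | hB
  · simpa using Fintype.card_pos
  have hle : (#B * #A : ℝ) ≤ Fintype.card F - #A :=
    le_of_mul_le_mul_left (a := (#B * #A : ℝ)) (by linarith) (by positivity)
  have hA0 : (0 : ℝ) < #A := by positivity
  exact_mod_cast (show (#A * #B : ℝ) < Fintype.card F by linarith)

/-- Let `q = p^n` be a prime power and `d ∣ q - 1` with `d > 1`.
If `A + B ⊆ S_d`, then `|A|·|B| < q`. -/
theorem stmt_8 (p n q : ℕ) (hp : p.Prime) (hn : 0 < n) (hq : q = p ^ n)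
    (F : Type) [Field F] [Fintype F] [DecidableEq F] (hF : Fintype.card F = q)
    (d : ℕ) (hd : d ∣ q - 1) (hd1 : 1 < d)
    (A B : Finset F)
    (hAB : A + B ⊆ Finset.image (fun x : Fˣ => ((x : F) ^ d)) Finset.univ) :
    A.card * B.card < q :=
  stmt_8_general q F hF d hd hd1 A B hAB
end

section
/- Let q be a power of a prime p, and let d be a divisor of q-1 with d > 1. If A, B ⊆ F_q satisfy A + B ⊆ S_d and the binomial coefficient C(|A| - 1 + (q-1)/d, (q-1)/d) is not divisible by p, then |A| · |B| ≤ (q-1)/d. -/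
/-! The polynomial method of Hanson and Petridis. With `m = (q - 1) / d`, every `a + b` with
`a ∈ A`, `b ∈ B` satisfies `(a + b) ^ m = 1`. Pick weights `c` on `A` killing the moments
`∑ c a * a ^ j` for `j < |A| - 1` but not `γ = ∑ c a * a ^ (|A| - 1)` (Vandermonde). Then
`Q = ∑ c a * (X + a) ^ (|A| - 1 + m) - γ` has degree at most `m`, its coefficient of `X ^ m`
is `C(|A| - 1 + m, m) * γ ≠ 0`, and every `b ∈ B` is a root of `Q` of multiplicity at least `|A|`:
as `(a + b) ^ m = 1`, for `j < |A|` the `j`-th Taylor coefficient of `Q` at `b` is a multiple of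
`∑ c a * (a + b) ^ (|A| - 1 - j) = ∑ c a * a ^ (|A| - 1 - j)` (the lower moments vanish), minus
`γ` if `j = 0`, which is zero. So `|A| * |B| ≤ deg Q ≤ m`. -/

open Pointwise Polynomial Finset

section Moments

variable {K ι : Type*} [Field K] [Fintype ι]

theorem exists_ne_zero_forall_sum_mul_pow_eq_zero (v : ι → K) {k : ℕ}
    (hk : k < Fintype.card ι) :
    ∃ c : ι → K, c ≠ 0 ∧ ∀ j < k, ∑ i, c i * v i ^ j = 0 := by
  let M : Matrix (Fin k) ι K := Matrix.of fun j i => v i ^ (j : ℕ)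
  have hker : LinearMap.ker M.mulVecLin ≠ ⊥ :=
    LinearMap.ker_ne_bot_of_finrank_lt (by simpa using hk)
  obtain ⟨c, hc, hc0⟩ := (Submodule.ne_bot_iff _).1 hker
  refine ⟨c, hc0, fun j hj => ?_⟩
  have := congrFun (LinearMap.mem_ker.1 hc) ⟨j, hj⟩
  simpa [M, Matrix.mulVec, dotProduct, mul_comm] using this

theorem eq_zero_of_forall_sum_mul_pow_eq_zero {v : ι → K} (hv : Function.Injective v)
    {c : ι → K} (hc : ∀ j < Fintype.card ι, ∑ i, c i * v i ^ j = 0) : c = 0 := by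
  let e := Fintype.equivFin ι
  have h : c ∘ e.symm = 0 :=
    Matrix.eq_zero_of_forall_pow_sum_mul_pow_eq_zero (hv.comp e.symm.injective) fun j => by
      simpa [← e.symm.sum_comp] using hc j j.isLt
  funext i
  simpa using congrFun h (e i)

theorem exists_forall_sum_mul_pow_eq_zero_and_ne_zero [Nonempty ι] {v : ι → K}
    (hv : Function.Injective v) :
    ∃ c : ι → K, (∀ j < Fintype.card ι - 1, ∑ i, c i * v i ^ j = 0) ∧
      ∑ i, c i * v i ^ (Fintype.card ι - 1) ≠ 0 := by
  have hpos := Fintype.card_pos (α := ι)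
  obtain ⟨c, hc0, hc⟩ := exists_ne_zero_forall_sum_mul_pow_eq_zero v (Nat.sub_lt hpos one_pos)
  refine ⟨c, hc, fun htop => hc0 (eq_zero_of_forall_sum_mul_pow_eq_zero hv fun j hj => ?_)⟩
  rcases (Nat.le_sub_one_of_lt hj).lt_or_eq with hlt | rfl
  exacts [hc j hlt, htop]

end Moments

section ShiftedPowSum

variable {R ι : Type*} [CommRing R] [Fintype ι]

theorem sum_mul_add_pow_eq_sum_mul_pow {c v : ι → R} {e : ℕ}
    (hc : ∀ j < e, ∑ i, c i * v i ^ j = 0) (b : R) :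
    ∑ i, c i * (v i + b) ^ e = ∑ i, c i * v i ^ e := by
  calc ∑ i, c i * (v i + b) ^ e
      = ∑ j ∈ range (e + 1), (∑ i, c i * v i ^ j) * (b ^ (e - j) * e.choose j) := by
        simp_rw [add_pow, mul_sum, sum_mul]
        rw [sum_comm]
        exact sum_congr rfl fun _ _ => sum_congr rfl fun _ _ => by ring
    _ = ∑ i, c i * v i ^ e := by
        rw [sum_range_succ, sum_eq_zero fun j hj => by rw [hc j (mem_range.1 hj), zero_mul]]
        simp


noncomputable def shiftedPowSum (c v : ι → R) (N : ℕ) : R[X] :=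
  ∑ i, C (c i) * (X + C (v i)) ^ N

theorem coeff_shiftedPowSum (c v : ι → R) (N t : ℕ) :
    (shiftedPowSum c v N).coeff t = N.choose t * ∑ i, c i * v i ^ (N - t) := by
  simp only [shiftedPowSum, finsetSum_coeff, coeff_C_mul, coeff_X_add_C_pow, mul_sum]
  exact sum_congr rfl fun _ _ => by ring

theorem taylor_shiftedPowSum (c v : ι → R) (N : ℕ) (b : R) :
    taylor b (shiftedPowSum c v N) = shiftedPowSum c (v · + b) N := by
  simp only [shiftedPowSum, map_sum, map_add, taylor_mul, taylor_pow, taylor_C, taylor_X]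
  exact sum_congr rfl fun _ _ => by ring

theorem natDegree_shiftedPowSum_sub_C_le {c v : ι → R} {e : ℕ}
    (hc : ∀ j < e, ∑ i, c i * v i ^ j = 0) (m : ℕ) (γ : R) :
    (shiftedPowSum c v (e + m) - C γ).natDegree ≤ m := by
  refine natDegree_le_iff_coeff_eq_zero.2 fun t ht => ?_
  rw [coeff_sub, coeff_C, if_neg (by omega), sub_zero, coeff_shiftedPowSum]
  rcases le_or_gt t (e + m) with h | h
  · rw [hc _ (by omega), mul_zero]
  · rw [Nat.choose_eq_zero_of_lt h, Nat.cast_zero, zero_mul]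

theorem coeff_shiftedPowSum_sub_C (c v : ι → R) (e : ℕ) {m : ℕ} (hm : m ≠ 0) :
    (shiftedPowSum c v (e + m) - C (∑ i, c i * v i ^ e)).coeff m =
      (e + m).choose m * ∑ i, c i * v i ^ e := by
  rw [coeff_sub, coeff_C, if_neg hm, sub_zero, coeff_shiftedPowSum, Nat.add_sub_cancel]

theorem le_rootMultiplicity_shiftedPowSum_sub_C {c v : ι → R} {e m : ℕ}
    (hc : ∀ j < e, ∑ i, c i * v i ^ j = 0) {b : R} (hb : ∀ i, (v i + b) ^ m = 1)
    (hne : shiftedPowSum c v (e + m) - C (∑ i, c i * v i ^ e) ≠ 0) :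
    e + 1 ≤ rootMultiplicity b (shiftedPowSum c v (e + m) - C (∑ i, c i * v i ^ e)) := by
  rw [rootMultiplicity_eq_natTrailingDegree, ← taylor_apply]
  refine le_natTrailingDegree (by rwa [Ne, taylor_eq_zero]) fun j hj => ?_
  have hpow : ∑ i, c i * (v i + b) ^ (e + m - j) = ∑ i, c i * v i ^ (e - j) := by
    rw [← sum_mul_add_pow_eq_sum_mul_pow (fun j' hj' => hc j' (by omega)) b]
    refine sum_congr rfl fun i _ => ?_
    rw [show e + m - j = m + (e - j) by omega, pow_add, hb, one_mul]
  rw [map_sub, taylor_C, coeff_sub, taylor_shiftedPowSum, coeff_shiftedPowSum, hpow, coeff_C]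
  rcases Nat.eq_zero_or_pos j with rfl | hj0
  · simp
  · rw [if_neg hj0.ne', hc _ (by omega), mul_zero, sub_zero]

end ShiftedPowSum

theorem card_mul_le_natDegree_of_forall_le_rootMultiplicity {R : Type*} [CommRing R] [IsDomain R]
    [DecidableEq R] (Q : R[X]) (B : Finset R) {k : ℕ}
    (h : ∀ b ∈ B, k ≤ rootMultiplicity b Q) : #B * k ≤ Q.natDegree := by
  have hle : k • B.val ≤ Q.roots := Multiset.le_iff_count.2 fun a => by
    rw [Multiset.count_nsmul, count_roots]
    by_cases ha : a ∈ B
    · rw [Multiset.count_eq_one_of_mem B.nodup ha, mul_one]; exact h a ha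
    · rw [Multiset.count_eq_zero_of_notMem ha, mul_zero]; exact Nat.zero_le _
  calc #B * k = Multiset.card (k • B.val) := by simp [mul_comm]
    _ ≤ Multiset.card Q.roots := Multiset.card_le_card hle
    _ ≤ Q.natDegree := card_roots' Q

theorem card_mul_card_le_of_forall_add_pow_eq_one {K : Type*} [Field K] [DecidableEq K]
    {m : ℕ} (hm : m ≠ 0) {A B : Finset K} (h : ∀ a ∈ A, ∀ b ∈ B, (a + b) ^ m = 1)
    (hbin : ((#A - 1 + m).choose m : K) ≠ 0) :
    #A * #B ≤ m := by
  rcases A.eq_empty_or_nonempty with rfl | hA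
  · simp
  have : Nonempty A := hA.to_subtype
  obtain ⟨c, hc, hγ⟩ := exists_forall_sum_mul_pow_eq_zero_and_ne_zero
    (Subtype.val_injective (p := (· ∈ A)))
  rw [Fintype.card_coe] at hc hγ
  set Q := shiftedPowSum c (↑) (#A - 1 + m) - C (∑ a : A, c a * (a : K) ^ (#A - 1))
  have hQm : Q.coeff m ≠ 0 := by
    rw [coeff_shiftedPowSum_sub_C c _ _ hm]
    exact mul_ne_zero hbin hγ
  have hQ : Q ≠ 0 := fun h0 => hQm (by rw [h0, coeff_zero])
  have hroot : ∀ b ∈ B, #A ≤ rootMultiplicity b Q := fun b hb => by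
    have := le_rootMultiplicity_shiftedPowSum_sub_C hc (fun a => h a a.2 b hb) hQ
    rwa [Nat.sub_add_cancel hA.card_pos] at this
  calc #A * #B = #B * #A := mul_comm _ _
    _ ≤ Q.natDegree := card_mul_le_natDegree_of_forall_le_rootMultiplicity Q B hroot
    _ ≤ m := natDegree_shiftedPowSum_sub_C_le hc m _

theorem stmt_10_general (p n q : ℕ) (hp : p.Prime) (hq : q = p ^ n)
    (F : Type) [Field F] [Fintype F] [DecidableEq F] (hF : Fintype.card F = q)
    (d : ℕ) (hd : d ∣ q - 1)
    (A B : Finset F)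
    (hAB : A + B ⊆ Finset.image (fun x : Fˣ => ((x : F) ^ d)) Finset.univ)
    (hbin : ¬ (p ∣ Nat.choose (A.card - 1 + (q - 1) / d) ((q - 1) / d))) :
    A.card * B.card ≤ (q - 1) / d := by
  have : Fact p.Prime := ⟨hp⟩
  have : CharP F p := charP_of_card_eq_prime_pow (hF.trans hq)
  have hdm : d * ((q - 1) / d) = q - 1 := Nat.mul_div_cancel' hd
  have hm : (q - 1) / d ≠ 0 := fun h0 => by
    have := hF ▸ Fintype.one_lt_card (α := F)
    rw [h0, mul_zero] at hdm
    omega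
  refine card_mul_card_le_of_forall_add_pow_eq_one hm (fun a ha b hb => ?_)
    (by rwa [Ne, CharP.cast_eq_zero_iff F p])
  obtain ⟨x, -, hx⟩ := Finset.mem_image.1 (hAB (Finset.add_mem_add ha hb))
  rw [← hx, ← pow_mul, hdm, ← hF]
  exact FiniteField.pow_card_sub_one_eq_one _ x.ne_zero

/-- Let `q = p^n` be a prime power and `d ∣ q - 1` with `d > 1`.
If `A + B ⊆ S_d` and `p` does not divide `C(|A| - 1 + (q-1)/d, (q-1)/d)`, then
`|A|·|B| ≤ (q-1)/d`. -/
theorem stmt_10 (p n q : ℕ) (hp : p.Prime) (hn : 0 < n) (hq : q = p ^ n)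
    (F : Type) [Field F] [Fintype F] [DecidableEq F] (hF : Fintype.card F = q)
    (d : ℕ) (hd : d ∣ q - 1) (hd1 : 1 < d)
    (A B : Finset F)
    (hAB : A + B ⊆ Finset.image (fun x : Fˣ => ((x : F) ^ d)) Finset.univ)
    (hbin : ¬ (p ∣ Nat.choose (A.card - 1 + (q - 1) / d) ((q - 1) / d))) :
    A.card * B.card ≤ (q - 1) / d :=
  stmt_10_general p n q hp hq F hF d hd A B hAB hbin
end

section
/- Let p ≥ 7 be a prime and n a positive integer. Then there exists a set A ⊆ F_{p^n} such that A + A = F_{p^n}* (the set of all nonzero elements of F_{p^n}). Consequently, if q = p^n with n ≥ 2, k is a proper divisor of n, and d = (q-1)/(p^k - 1), then S_d can be written as A + A for some A ⊆ F_q. -/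
/-!
In `ZMod p` with `p = 2h + 1 ≥ 7` the set `{1, …, h - 1} ∪ {h + 1}` works: its sumset covers
`2, …, 2h`, contains `(h + 1) + (h + 1) = p + 1 ≡ 1` and misses `p`. The property that the
nonzero elements form a sumset passes to products (if `B + B = G \ {0}` and `S + S = H \ {0}`,
take `(B × {0}) ∪ (G × S)`), hence to `(ZMod p)ⁿ` and to every finite field of characteristic
`p`. For the second part, `x ↦ x ^ d` maps the cyclic group `F_qˣ` onto its subgroup of order
`p^k - 1`, which is `F_{p^k}ˣ`, so the first part applied to the subfield `F_{p^k}` suffices.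
-/

open Pointwise

def IsSumset {G : Type*} [Add G] (S : Set G) : Prop :=
  ∃ A : Set G, A + A = S

namespace IsSumset

variable {G H : Type*}

theorem image [Add G] [Add H] {F : Type*} [FunLike F G H] [AddHomClass F G H]
    {S : Set G} (hS : IsSumset S) (f : F) : IsSumset (f '' S) := by
  obtain ⟨A, rfl⟩ := hS
  exact ⟨f '' A, (Set.image_add f).symm⟩

theorem exists_finset [Add G] [DecidableEq G] [Finite G] {S : Finset G}
    (hS : IsSumset (S : Set G)) : ∃ A : Finset G, A + A = S := by
  obtain ⟨A, hA⟩ := hS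
  refine ⟨(Set.toFinite A).toFinset, Finset.coe_injective ?_⟩
  rw [Finset.coe_add, Set.Finite.coe_toFinset, hA]

theorem compl_zero_of_addEquiv [AddZeroClass G] [AddZeroClass H]
    (hG : IsSumset ({0}ᶜ : Set G)) (e : G ≃+ H) : IsSumset ({0}ᶜ : Set H) := by
  simpa [Set.image_compl_eq e.bijective] using hG.image e

theorem prod_compl_zero [AddZeroClass G] [AddZeroClass H]
    (hG : IsSumset ({0}ᶜ : Set G)) (hH : IsSumset ({0}ᶜ : Set H)) :
    IsSumset ({0}ᶜ : Set (G × H)) := by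
  obtain ⟨B, hB⟩ := hG
  obtain ⟨S, hS⟩ := hH
  have memB {b b' : G} (hb : b ∈ B) (hb' : b' ∈ B) : b + b' ≠ 0 :=
    Set.mem_compl_singleton_iff.mp (hB ▸ Set.add_mem_add hb hb')
  have memS {s s' : H} (hs : s ∈ S) (hs' : s' ∈ S) : s + s' ≠ 0 :=
    Set.mem_compl_singleton_iff.mp (hS ▸ Set.add_mem_add hs hs')
  have hS0 : (0 : H) ∉ S := fun h => memS h h (add_zero 0)
  refine ⟨B ×ˢ {0} ∪ Set.univ ×ˢ S, Set.ext fun ⟨c, c'⟩ => ⟨?_, fun hc => ?_⟩⟩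
  · rintro ⟨⟨x, x'⟩, hx, ⟨y, y'⟩, hy, hxy⟩
    simp only [Prod.mk_add_mk, Prod.mk.injEq] at hxy
    simp only [Set.mem_union, Set.mem_prod, Set.mem_singleton_iff, Set.mem_univ, true_and] at hx hy
    simp only [Set.mem_compl_iff, Set.mem_singleton_iff, Prod.mk_eq_zero, not_and_or, ← hxy.1,
      ← hxy.2]
    rcases hx with ⟨hx, rfl⟩ | hx <;> rcases hy with ⟨hy, rfl⟩ | hy
    · exact .inl (memB hx hy)
    · exact .inr (by simpa using ne_of_mem_of_not_mem hy hS0)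
    · exact .inr (by simpa using ne_of_mem_of_not_mem hx hS0)
    · exact .inr (memS hx hy)
  · by_cases hc' : c' = 0
    · subst hc'
      obtain ⟨b, hb, b', hb', rfl⟩ : c ∈ B + B := hB ▸ fun h => hc (h ▸ rfl)
      exact ⟨(b, 0), .inl ⟨hb, rfl⟩, (b', 0), .inl ⟨hb', rfl⟩, by simp⟩
    · obtain ⟨s, hs, s', hs', rfl⟩ : c' ∈ S + S := hS ▸ hc'
      exact ⟨(c, s), .inr ⟨trivial, hs⟩, (0, s'), .inr ⟨trivial, hs'⟩, by simp⟩

theorem pi_compl_zero [AddCommMonoid G] (hG : IsSumset ({0}ᶜ : Set G)) {m : ℕ}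
    (hm : 0 < m) : IsSumset ({0}ᶜ : Set (Fin m → G)) := by
  induction m, hm using Nat.le_induction with
  | base => exact hG.compl_zero_of_addEquiv (AddEquiv.funUnique (Fin 1) G).symm
  | succ m _ ih =>
    exact (hG.prod_compl_zero ih).compl_zero_of_addEquiv
      (Fin.consLinearEquiv ℕ fun _ : Fin (m + 1) => G).toAddEquiv

theorem compl_zero_of_module {K V : Type*} [Field K] [AddCommGroup V] [Module K V]
    [FiniteDimensional K V] [Nontrivial V] (hK : IsSumset ({0}ᶜ : Set K)) :
    IsSumset ({0}ᶜ : Set V) :=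
  (hK.pi_compl_zero Module.finrank_pos).compl_zero_of_addEquiv
    (Module.finBasis K V).equivFun.symm.toAddEquiv

end IsSumset

theorem Nat.sumset_Icc_union_singleton {h : ℕ} (hh : 3 ≤ h) :
    (Set.Icc 1 (h - 1) ∪ {h + 1}) + (Set.Icc 1 (h - 1) ∪ {h + 1}) =
      Set.Icc 2 (2 * h) ∪ {2 * h + 2} := by
  ext s
  simp only [Set.mem_add, Set.mem_union, Set.mem_Icc, Set.mem_singleton_iff]
  constructor
  · rintro ⟨a, ha, b, hb, rfl⟩
    omega
  · rintro (hs | rfl)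
    · rcases le_or_gt s h with hsh | hsh
      · exact ⟨s - 1, by omega, 1, by omega, by omega⟩
      rcases le_or_gt s (2 * h - 2) with hsh' | hsh'
      · exact ⟨s - (h - 1), by omega, h - 1, by omega, by omega⟩
      · exact ⟨s - (h + 1), by omega, h + 1, by omega, by omega⟩
    · exact ⟨h + 1, by omega, h + 1, by omega, by omega⟩

theorem ZMod.image_natCast_Icc_union_singleton {h : ℕ} (hh : 0 < h) :
    ((↑) : ℕ → ZMod (2 * h + 1)) '' (Set.Icc 2 (2 * h) ∪ {2 * h + 2}) = {0}ᶜ := by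
  ext c
  simp only [Set.mem_image, Set.mem_union, Set.mem_Icc, Set.mem_singleton_iff,
    Set.mem_compl_iff]
  constructor
  · rintro ⟨s, hs, rfl⟩ hs0
    have := Nat.eq_of_dvd_of_lt_two_mul (by omega) ((ZMod.natCast_eq_zero_iff _ _).mp hs0)
      (by omega)
    omega
  · intro hc
    obtain ⟨v, hv, rfl⟩ : ∃ v < 2 * h + 1, (v : ZMod (2 * h + 1)) = c :=
      ⟨c.val, c.val_lt, c.natCast_zmod_val⟩
    have hv0 : v ≠ 0 := by rintro rfl; exact hc Nat.cast_zero
    by_cases hv1 : v = 1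
    · refine ⟨2 * h + 2, .inr rfl, ?_⟩
      rw [hv1, show 2 * h + 2 = (2 * h + 1) + 1 by ring, Nat.cast_add, ZMod.natCast_self,
        zero_add, Nat.cast_one]
    · exact ⟨v, .inl ⟨by omega, by omega⟩, rfl⟩

theorem ZMod.isSumset_compl_zero {p : ℕ} (hp : Odd p) (hp7 : 7 ≤ p) :
    IsSumset ({0}ᶜ : Set (ZMod p)) := by
  obtain ⟨h, rfl⟩ := hp
  refine ⟨Nat.castAddMonoidHom _ '' (Set.Icc 1 (h - 1) ∪ {h + 1}), ?_⟩
  rw [← Set.image_add, Nat.sumset_Icc_union_singleton (by omega)]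
  exact ZMod.image_natCast_Icc_union_singleton (by omega)

theorem FiniteField.isSumset_compl_zero {K : Type*} [Field K] [Finite K] {p : ℕ} [CharP K p]
    (hp7 : 7 ≤ p) : IsSumset ({0}ᶜ : Set K) := by
  have hp := CharP.char_is_prime K p
  have := Fact.mk hp
  let := ZMod.algebra K p
  have : FiniteDimensional (ZMod p) K := Module.Finite.of_finite
  exact (ZMod.isSumset_compl_zero (hp.odd_of_ne_two (by omega)) hp7).compl_zero_of_module

theorem IsCyclic.range_powMonoidHom_eq_ker {G : Type*} [CommGroup G] [IsCyclic G] [Finite G]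
    {d e : ℕ} (h : Nat.card G = d * e) :
    (powMonoidHom d : G →* G).range = (powMonoidHom e).ker := by
  apply Subgroup.eq_of_le_of_card_ge
  · rintro _ ⟨x, rfl⟩
    rw [MonoidHom.mem_ker, powMonoidHom_apply, powMonoidHom_apply, ← pow_mul, ← h,
      pow_card_eq_one']
  · have hd : 0 < d := Nat.pos_of_mul_pos_right (h ▸ Nat.card_pos)
    rw [card_powMonoidHom_range, card_powMonoidHom_ker, h, Nat.gcd_mul_left_left,
      Nat.gcd_mul_right_left, Nat.mul_div_cancel_left _ hd]

theorem FiniteField.range_pow_units {K : Type*} [Field K] [Finite K] {d e : ℕ}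
    (h : Nat.card K - 1 = d * e) :
    Set.range (fun x : Kˣ => (x : K) ^ d) = {y : K | y ≠ 0 ∧ y ^ e = 1} := by
  have hrange := IsCyclic.range_powMonoidHom_eq_ker (G := Kˣ) (Nat.card_units K ▸ h)
  ext y
  constructor
  · rintro ⟨x, rfl⟩
    have hx : x ^ d ∈ (powMonoidHom e : Kˣ →* Kˣ).ker := hrange ▸ ⟨x, rfl⟩
    exact ⟨pow_ne_zero _ x.ne_zero, by simpa [Units.ext_iff] using hx⟩
  · rintro ⟨hy0, hy⟩
    have hu : Units.mk0 y hy0 ∈ (powMonoidHom e : Kˣ →* Kˣ).ker := by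
      simpa [Units.ext_iff] using hy
    obtain ⟨x, hx⟩ := hrange ▸ hu
    exact ⟨x, by simpa [Units.ext_iff] using hx⟩

theorem FiniteField.isSumset_range_pow_units {F : Type*} [Field F] [Fintype F] {p n k : ℕ}
    [Fact p.Prime] [CharP F p] (hp7 : 7 ≤ p) (hF : Fintype.card F = p ^ n)
    (hkn : k ∣ n) :
    IsSumset (Set.range fun x : Fˣ => (x : F) ^ ((p ^ n - 1) / (p ^ k - 1))) := by
  have hde : Nat.card F - 1 = (p ^ n - 1) / (p ^ k - 1) * (p ^ k - 1) := by
    rw [Nat.card_eq_fintype_card, hF,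
      Nat.div_mul_cancel (Nat.pow_sub_one_dvd_pow_sub_one p hkn)]
  -- `L` is the subfield `F_{p^k}`: the elements fixed by `x ↦ x ^ p ^ k`.
  let L := (iterateFrobenius F p k).eqLocusField (RingHom.id F)
  have hL : {y : F | y ≠ 0 ∧ y ^ (p ^ k - 1) = 1} = L.subtype '' {0}ᶜ := by
    have hq : p ^ k - 1 + 1 = p ^ k :=
      Nat.sub_one_add_one (pow_ne_zero k (Fact.out : p.Prime).ne_zero)
    ext y
    have hmem : y ∈ L ↔ y ^ (p ^ k - 1) * y = y := by
      rw [← pow_succ, hq]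
      exact Iff.rfl
    constructor
    · rintro ⟨hy0, hy⟩
      exact ⟨⟨y, hmem.mpr (by rw [hy, one_mul])⟩, fun h => hy0 (congrArg Subtype.val h), rfl⟩
    · rintro ⟨y, hy0, rfl⟩
      have hy0 : (y : F) ≠ 0 := fun h => hy0 (Subtype.ext h)
      exact ⟨hy0, (mul_eq_right₀ hy0).mp (hmem.mp y.2)⟩
  rw [FiniteField.range_pow_units hde, hL]
  exact (FiniteField.isSumset_compl_zero (K := L) hp7).image L.subtype

theorem stmt_14_general (p n : ℕ) (hp : p.Prime) (hp7 : 7 ≤ p)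
    (F : Type) [Field F] [Fintype F] [DecidableEq F] (hF : Fintype.card F = p ^ n) :
    (∃ A : Finset F, A + A = Finset.univ \ {(0 : F)}) ∧
    (∀ k : ℕ, 2 ≤ n → 0 < k → k ∣ n → k ≠ n →
      ∃ A : Finset F,
        A + A = Finset.image
          (fun x : Fˣ => ((x : F) ^ ((p ^ n - 1) / (p ^ k - 1)))) Finset.univ) := by
  have := Fact.mk hp
  have := charP_of_card_eq_prime_pow hF
  constructor
  · apply IsSumset.exists_finset
    simpa [← Set.compl_eq_univ_sdiff] using FiniteField.isSumset_compl_zero (K := F) hp7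
  · intro k _ _ hkn _
    apply IsSumset.exists_finset
    simpa using FiniteField.isSumset_range_pow_units hp7 hF hkn

/-- Let `p ≥ 7` be a prime and `n ≥ 1`.  Then there is `A ⊆ F_{p^n}`
with `A + A = F_{p^n}*`.  Consequently, if `n ≥ 2` and `k` is a proper divisor of `n`,
then with `d = (p^n - 1)/(p^k - 1)` the subgroup `S_d` can be written as `A + A`. -/
theorem stmt_14 (p n : ℕ) (hp : p.Prime) (hp7 : 7 ≤ p) (hn : 0 < n)
    (F : Type) [Field F] [Fintype F] [DecidableEq F] (hF : Fintype.card F = p ^ n) :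
    (∃ A : Finset F, A + A = Finset.univ \ {(0 : F)}) ∧
    (∀ k : ℕ, 2 ≤ n → 0 < k → k ∣ n → k ≠ n →
      ∃ A : Finset F,
        A + A = Finset.image
          (fun x : Fˣ => ((x : F) ^ ((p ^ n - 1) / (p ^ k - 1)))) Finset.univ) :=
  stmt_14_general p n hp hp7 F hF
end

section
/- Let p ≥ 5 be a prime and n a positive integer. Then there exist sets A, B, C ⊆ F_{p^n} with |A| ≥ 2, |B| ≥ 2, |C| ≥ 2 such that A + B + C = F_{p^n}* (the set of all nonzero elements of F_{p^n}). -/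
/-!
With `S = {-1, 0, 1} = {0, 1} + {0, -1}` and `A = F \ S`, the sumset `A + S` misses `0`, because
`a + s = 0` forces `a = -s ∈ S`. Every other `x` is hit: `x = x + 0` if `x ∉ S`, while
`1 = 2 + (-1)` and `-1 = -2 + 1`, where `±2 ∉ S` because the characteristic is neither `2` nor `3`.
Finally `|A| = p ^ n - 3 ≥ 2`.
-/

open Pointwise Finset

section CommRing

variable {R : Type*} [CommRing R] [DecidableEq R]

theorem pair_zero_one_add_pair_zero_neg_one :
    ({0, 1} : Finset R) + {0, -1} = {-1, 0, 1} := by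
  ext x
  simp only [mem_add, mem_insert, mem_singleton]
  constructor
  · rintro ⟨a, ha, b, hb, rfl⟩
    rcases ha with rfl | rfl <;> rcases hb with rfl | rfl <;> simp
  · rintro (rfl | rfl | rfl)
    · exact ⟨0, by simp, -1, by simp, by simp⟩
    · exact ⟨0, by simp, 0, by simp, by simp⟩
    · exact ⟨1, by simp, 0, by simp, by simp⟩

theorem two_notMem_neg_one_zero_one (h2 : (2 : R) ≠ 0) (h3 : (3 : R) ≠ 0) :
    (2 : R) ∉ ({-1, 0, 1} : Finset R) := by
  have h1 : (1 : R) ≠ 0 := fun h ↦ h2 (by linear_combination 2 * h)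
  simp only [mem_insert, mem_singleton, not_or]
  exact ⟨fun h ↦ h3 (by linear_combination h), h2, fun h ↦ h1 (by linear_combination h)⟩

theorem neg_two_notMem_neg_one_zero_one (h2 : (2 : R) ≠ 0) (h3 : (3 : R) ≠ 0) :
    (-2 : R) ∉ ({-1, 0, 1} : Finset R) := by
  have h := two_notMem_neg_one_zero_one h2 h3
  simp only [mem_insert, mem_singleton, not_or] at h ⊢
  obtain ⟨h₁, h₂, h₃⟩ := h
  exact ⟨fun h ↦ h₃ (by linear_combination -h), fun h ↦ h₂ (by linear_combination -h),
    fun h ↦ h₁ (by linear_combination -h)⟩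

variable [Fintype R]

theorem card_compl_neg_one_zero_one (h2 : (2 : R) ≠ 0) :
    #(univ \ {-1, 0, 1} : Finset R) = Fintype.card R - 3 := by
  have h1 : (1 : R) ≠ 0 := fun h ↦ h2 (by linear_combination 2 * h)
  have hS : #({-1, 0, 1} : Finset R) = 3 := by
    rw [card_insert_of_notMem, card_pair h1.symm]
    simp only [mem_insert, mem_singleton, not_or]
    exact ⟨neg_ne_zero.mpr h1, fun h ↦ h2 (by linear_combination -h)⟩
  rw [card_sdiff_of_subset (subset_univ _), hS, card_univ]

theorem compl_neg_one_zero_one_add_self (h2 : (2 : R) ≠ 0) (h3 : (3 : R) ≠ 0) :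
    (univ \ {-1, 0, 1}) + {-1, 0, 1} = univ \ {(0 : R)} := by
  ext x
  simp only [mem_add, mem_sdiff, mem_univ, true_and, mem_singleton]
  constructor
  · rintro ⟨a, ha, s, hs, rfl⟩ h
    rw [eq_neg_of_add_eq_zero_left h] at ha
    simp only [mem_insert, mem_singleton] at hs ha
    rcases hs with rfl | rfl | rfl <;> simp at ha
  · intro hx
    by_cases hxS : x ∈ ({-1, 0, 1} : Finset R)
    · simp only [mem_insert, mem_singleton, hx, false_or] at hxS
      rcases hxS with rfl | rfl
      · exact ⟨-2, neg_two_notMem_neg_one_zero_one h2 h3, 1, by simp, by norm_num⟩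
      · exact ⟨2, two_notMem_neg_one_zero_one h2 h3, -1, by simp, by norm_num⟩
    · exact ⟨x, hxS, 0, by simp, add_zero x⟩

end CommRing

/-- Let `p ≥ 5` be a prime and `n ≥ 1`.  Then there are sets
`A, B, C ⊆ F_{p^n}` with `|A|, |B|, |C| ≥ 2` and `A + B + C = F_{p^n}*`. -/
theorem stmt_15 (p n : ℕ) (hp : p.Prime) (hp5 : 5 ≤ p) (hn : 0 < n)
    (F : Type) [Field F] [Fintype F] [DecidableEq F] (hF : Fintype.card F = p ^ n) :
    ∃ A B C : Finset F, 2 ≤ A.card ∧ 2 ≤ B.card ∧ 2 ≤ C.card ∧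
      A + B + C = Finset.univ \ {(0 : F)} := by
  have : Fact p.Prime := ⟨hp⟩
  have : CharP F p := charP_of_card_eq_prime_pow hF
  have h2 : ((2 : ℕ) : F) ≠ 0 := CharP.cast_ne_zero_of_ne_of_prime F Nat.prime_two (by omega)
  have h3 : ((3 : ℕ) : F) ≠ 0 := CharP.cast_ne_zero_of_ne_of_prime F Nat.prime_three (by omega)
  push_cast at h2 h3
  have hcard : 5 ≤ Fintype.card F := hF ▸ hp5.trans (Nat.le_self_pow hn.ne' p)
  refine ⟨univ \ {-1, 0, 1}, {0, 1}, {0, -1}, ?_, ?_, ?_, ?_⟩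
  · rw [card_compl_neg_one_zero_one h2]
    omega
  · rw [card_pair zero_ne_one]
  · rw [card_pair (neg_ne_zero.mpr one_ne_zero).symm]
  · rw [add_assoc, pair_zero_one_add_pair_zero_neg_one, compl_neg_one_zero_one_add_self h2 h3]
end
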